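/- arXiv:1402.2253 — 2 statements merged into one kernel-verified Lean document; each statement's English description precedes it below -/
import Mathlib

section
/- With B₁, B₂, B₃, B₋₁, B₋₂, B₋₃ ⊂ ℂ² as defined (B₁ = {k₂−k₁ ∈ −4/3+ℤ_{≤0}}, B₋₁ = {k₂−k₁ ∈ 2/3+ℤ_{≥0}}, B₂ = {k₂ ∈ 4/3+ℤ_{≥0}}, B₋₂ = {k₂ ∈ −2/3−ℤ_{≥0}}, B₃ = {k₁ ∈ 7/6+(1/2)ℤ_{≥0}}, B₋₃ = {k₁ ∈ 1/6−(1/2)ℤ_{≥0}}), and the four regions A = {(k₁,k₂) ∈ ℝ² : k₂ ≥ 4/3, k₂−k₁ ≥ 2/3, k₁ ≤ 7/6}, B = {k₂ ≤ −2/3, k₂−k₁ ≤ −4/3, k₁ ≥ 1/6}, C = {k₂−k₁ ≥ 2/3, k₁ > 7/6}, D = {k₂−k₁ ≤ −4/3, k₁ < 1/6}, the inclusion (B₁ ∪ B₂ ∪ B₃) ∩ (B₋₁ ∪ B₋₂ ∪ B₋₃) ⊆ A ∪ B ∪ C ∪ D holds. -/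
/-- The bad-parameter sets `B₁, B₋₁, B₂, B₋₂, B₃, B₋₃ ⊆ ℂ²` for `W = μ₃`,
indexed by `i ∈ {1,−1,2,−2,3,−3}` (empty otherwise). -/
noncomputable def Bmu3 (i : ℤ) : Set (ℂ × ℂ) :=
  if i = 1 then {p | ∃ m : ℤ, m ≤ 0 ∧ p.2 - p.1 = -4/3 + (m : ℂ)}
  else if i = -1 then {p | ∃ m : ℤ, 0 ≤ m ∧ p.2 - p.1 = 2/3 + (m : ℂ)}
  else if i = 2 then {p | ∃ m : ℤ, 0 ≤ m ∧ p.2 = 4/3 + (m : ℂ)}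
  else if i = -2 then {p | ∃ m : ℤ, 0 ≤ m ∧ p.2 = -2/3 - (m : ℂ)}
  else if i = 3 then {p | ∃ m : ℤ, 0 ≤ m ∧ p.1 = 7/6 + (m : ℂ)/2}
  else if i = -3 then {p | ∃ m : ℤ, 0 ≤ m ∧ p.1 = 1/6 - (m : ℂ)/2}
  else ∅

/-- Region `A ⊆ ℝ² ⊆ ℂ²`: `k₂ ≥ 4/3`, `k₂ − k₁ ≥ 2/3`, `k₁ ≤ 7/6`. -/
def regA : Set (ℂ × ℂ) :=
  {p | p.1.im = 0 ∧ p.2.im = 0 ∧ 4/3 ≤ p.2.re ∧ 2/3 ≤ p.2.re - p.1.re ∧ p.1.re ≤ 7/6}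

/-- Region `B`: `k₂ ≤ −2/3`, `k₂ − k₁ ≤ −4/3`, `k₁ ≥ 1/6`. -/
def regB : Set (ℂ × ℂ) :=
  {p | p.1.im = 0 ∧ p.2.im = 0 ∧ p.2.re ≤ -2/3 ∧ p.2.re - p.1.re ≤ -4/3 ∧ 1/6 ≤ p.1.re}

/-- Region `C`: `k₂ − k₁ ≥ 2/3`, `k₁ > 7/6`. -/
def regC : Set (ℂ × ℂ) :=
  {p | p.1.im = 0 ∧ p.2.im = 0 ∧ 2/3 ≤ p.2.re - p.1.re ∧ 7/6 < p.1.re}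

/-- Region `D`: `k₂ − k₁ ≤ −4/3`, `k₁ < 1/6`. -/
def regD : Set (ℂ × ℂ) :=
  {p | p.1.im = 0 ∧ p.2.im = 0 ∧ p.2.re - p.1.re ≤ -4/3 ∧ p.1.re < 1/6}

lemma toReal {z : ℂ} {r : ℝ} (h : z = (r : ℂ)) : z.im = 0 ∧ z.re = r := by
  simp [h]

/-- `(B₁ ∪ B₂ ∪ B₃) ∩ (B₋₁ ∪ B₋₂ ∪ B₋₃) ⊆ A ∪ B ∪ C ∪ D`. -/
theorem stmt5 :
    (Bmu3 1 ∪ Bmu3 2 ∪ Bmu3 3) ∩ (Bmu3 (-1) ∪ Bmu3 (-2) ∪ Bmu3 (-3)) ⊆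
      regA ∪ regB ∪ regC ∪ regD := by
  intro p ⟨hpos, hneg⟩
  have hpos' : (∃ m : ℤ, m ≤ 0 ∧ p.2 - p.1 = -4/3 + (m : ℂ)) ∨
      (∃ m : ℤ, 0 ≤ m ∧ p.2 = 4/3 + (m : ℂ)) ∨
      (∃ m : ℤ, 0 ≤ m ∧ p.1 = 7/6 + (m : ℂ)/2) := by
    rcases hpos with (h | h) | h
    · exact Or.inl (by simpa [Bmu3] using h)
    · exact Or.inr (Or.inl (by simpa [Bmu3] using h))
    · exact Or.inr (Or.inr (by simpa [Bmu3] using h))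
  have hneg' : (∃ n : ℤ, 0 ≤ n ∧ p.2 - p.1 = 2/3 + (n : ℂ)) ∨
      (∃ n : ℤ, 0 ≤ n ∧ p.2 = -2/3 - (n : ℂ)) ∨
      (∃ n : ℤ, 0 ≤ n ∧ p.1 = 1/6 - (n : ℂ)/2) := by
    rcases hneg with (h | h) | h
    · exact Or.inl (by simpa [Bmu3] using h)
    · exact Or.inr (Or.inl (by simpa [Bmu3] using h))
    · exact Or.inr (Or.inr (by simpa [Bmu3] using h))
  rcases hpos' with ⟨m, hm, e⟩ | ⟨m, hm, e⟩ | ⟨m, hm, e⟩ <;>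
    rcases hneg' with ⟨n, hn, f⟩ | ⟨n, hn, f⟩ | ⟨n, hn, f⟩ <;>
    have hm' : (m : ℝ) ≤ 0 ∨ (0:ℝ) ≤ (m:ℝ) := by exact_mod_cast
      (by omega : m ≤ 0 ∨ 0 ≤ m)
  all_goals clear hpos hneg
  -- case B₁ ∩ B₋₁ : contradiction
  · exfalso
    have hmr : (m : ℝ) ≤ 0 := by exact_mod_cast hm
    have hnr : (0:ℝ) ≤ (n : ℝ) := by exact_mod_cast hn
    have e' := (toReal (show p.2 - p.1 = ((-4/3 + (m:ℝ) : ℝ) : ℂ) by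
      rw [e]; push_cast; ring)).2
    have f' := (toReal (show p.2 - p.1 = ((2/3 + (n:ℝ) : ℝ) : ℂ) by
      rw [f]; push_cast; ring)).2
    linarith [e'.symm.trans f']
  -- case B₁ ∩ B₋₂ : regB or regD
  · have hmr : (m : ℝ) ≤ 0 := by exact_mod_cast hm
    have hnr : (0:ℝ) ≤ (n : ℝ) := by exact_mod_cast hn
    obtain ⟨ei, er⟩ := toReal (show p.2 - p.1 = ((-4/3 + (m:ℝ) : ℝ) : ℂ) by
      rw [e]; push_cast; ring)
    obtain ⟨fi, fr⟩ := toReal (show p.2 = ((-2/3 - (n:ℝ) : ℝ) : ℂ) by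
      rw [f]; push_cast; ring)
    rw [Complex.sub_im] at ei
    rw [Complex.sub_re] at er
    have h1im : p.1.im = 0 := by linarith
    rcases le_or_gt (1/6 : ℝ) p.1.re with h | h
    · exact Or.inl (Or.inl (Or.inr ⟨h1im, fi, by linarith, by linarith, h⟩))
    · exact Or.inr ⟨h1im, fi, by linarith, h⟩
  -- case B₁ ∩ B₋₃ : regB or regD
  · have hmr : (m : ℝ) ≤ 0 := by exact_mod_cast hm
    have hnr : (0:ℝ) ≤ (n : ℝ) := by exact_mod_cast hn
    obtain ⟨ei, er⟩ := toReal (show p.2 - p.1 = ((-4/3 + (m:ℝ) : ℝ) : ℂ) by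
      rw [e]; push_cast; ring)
    obtain ⟨fi, fr⟩ := toReal (show p.1 = ((1/6 - (n:ℝ)/2 : ℝ) : ℂ) by
      rw [f]; push_cast; ring)
    rw [Complex.sub_im] at ei
    rw [Complex.sub_re] at er
    have h2im : p.2.im = 0 := by linarith
    rcases le_or_gt (1/6 : ℝ) p.1.re with h | h
    · exact Or.inl (Or.inl (Or.inr ⟨fi, h2im, by linarith, by linarith, h⟩))
    · exact Or.inr ⟨fi, h2im, by linarith, h⟩
  -- case B₂ ∩ B₋₁ : regA or regC
  · have hmr : (0:ℝ) ≤ (m : ℝ) := by exact_mod_cast hm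
    have hnr : (0:ℝ) ≤ (n : ℝ) := by exact_mod_cast hn
    obtain ⟨ei, er⟩ := toReal (show p.2 = ((4/3 + (m:ℝ) : ℝ) : ℂ) by
      rw [e]; push_cast; ring)
    obtain ⟨fi, fr⟩ := toReal (show p.2 - p.1 = ((2/3 + (n:ℝ) : ℝ) : ℂ) by
      rw [f]; push_cast; ring)
    rw [Complex.sub_im] at fi
    rw [Complex.sub_re] at fr
    have h1im : p.1.im = 0 := by linarith
    rcases le_or_gt p.1.re (7/6 : ℝ) with h | h
    · exact Or.inl (Or.inl (Or.inl ⟨h1im, ei, by linarith, by linarith, h⟩))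
    · exact Or.inl (Or.inr ⟨h1im, ei, by linarith, h⟩)
  -- case B₂ ∩ B₋₂ : contradiction
  · exfalso
    have hmr : (0:ℝ) ≤ (m : ℝ) := by exact_mod_cast hm
    have hnr : (0:ℝ) ≤ (n : ℝ) := by exact_mod_cast hn
    have e' := (toReal (show p.2 = ((4/3 + (m:ℝ) : ℝ) : ℂ) by
      rw [e]; push_cast; ring)).2
    have f' := (toReal (show p.2 = ((-2/3 - (n:ℝ) : ℝ) : ℂ) by
      rw [f]; push_cast; ring)).2
    linarith [e'.symm.trans f']
  -- case B₂ ∩ B₋₃ : regA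
  · have hmr : (0:ℝ) ≤ (m : ℝ) := by exact_mod_cast hm
    have hnr : (0:ℝ) ≤ (n : ℝ) := by exact_mod_cast hn
    obtain ⟨ei, er⟩ := toReal (show p.2 = ((4/3 + (m:ℝ) : ℝ) : ℂ) by
      rw [e]; push_cast; ring)
    obtain ⟨fi, fr⟩ := toReal (show p.1 = ((1/6 - (n:ℝ)/2 : ℝ) : ℂ) by
      rw [f]; push_cast; ring)
    exact Or.inl (Or.inl (Or.inl ⟨fi, ei, by linarith, by linarith, by linarith⟩))
  -- case B₃ ∩ B₋₁ : regA or regC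
  · have hmr : (0:ℝ) ≤ (m : ℝ) := by exact_mod_cast hm
    have hnr : (0:ℝ) ≤ (n : ℝ) := by exact_mod_cast hn
    obtain ⟨ei, er⟩ := toReal (show p.1 = ((7/6 + (m:ℝ)/2 : ℝ) : ℂ) by
      rw [e]; push_cast; ring)
    obtain ⟨fi, fr⟩ := toReal (show p.2 - p.1 = ((2/3 + (n:ℝ) : ℝ) : ℂ) by
      rw [f]; push_cast; ring)
    rw [Complex.sub_im] at fi
    rw [Complex.sub_re] at fr
    have h2im : p.2.im = 0 := by linarith
    rcases le_or_gt p.1.re (7/6 : ℝ) with h | h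
    · exact Or.inl (Or.inl (Or.inl ⟨ei, h2im, by linarith, by linarith, h⟩))
    · exact Or.inl (Or.inr ⟨ei, h2im, by linarith, h⟩)
  -- case B₃ ∩ B₋₂ : regB
  · have hmr : (0:ℝ) ≤ (m : ℝ) := by exact_mod_cast hm
    have hnr : (0:ℝ) ≤ (n : ℝ) := by exact_mod_cast hn
    obtain ⟨ei, er⟩ := toReal (show p.1 = ((7/6 + (m:ℝ)/2 : ℝ) : ℂ) by
      rw [e]; push_cast; ring)
    obtain ⟨fi, fr⟩ := toReal (show p.2 = ((-2/3 - (n:ℝ) : ℝ) : ℂ) by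
      rw [f]; push_cast; ring)
    exact Or.inl (Or.inl (Or.inr ⟨ei, fi, by linarith, by linarith, by linarith⟩))
  -- case B₃ ∩ B₋₃ : contradiction
  · exfalso
    have hmr : (0:ℝ) ≤ (m : ℝ) := by exact_mod_cast hm
    have hnr : (0:ℝ) ≤ (n : ℝ) := by exact_mod_cast hn
    have e' := (toReal (show p.1 = ((7/6 + (m:ℝ)/2 : ℝ) : ℂ) by
      rw [e]; push_cast; ring)).2
    have f' := (toReal (show p.1 = ((1/6 - (n:ℝ)/2 : ℝ) : ℂ) by
      rw [f]; push_cast; ring)).2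
    linarith [e'.symm.trans f']
end

section
/- For a vector λ = (a_k^{(m)}) ∈ ℤ^{n·l} with entries in {0,1} indexed by k ∈ {1,…,n}, m ∈ ℤ/l, suppose a_i^{(0)} = 1 for all i (i.e. i(λ) = 0) and λ is not the all-ones vector. Then for any point x of X = T*Rep(Q^l_∞, ε) that λ destabilises with respect to θ = (−1,…,−1), the vector w-component of x must be zero, and consequently the optimal subgroup λ_x constructed from x is the all-ones vector, so λ ≠ λ_x. -/
open scoped Classical

/-- A point of `X = T*Rep(Q^l_∞, ε)`: matrices `X^{(m)}, Y^{(m)}` for `m ∈ ℤ/l`,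
and vectors `v, w`. -/
structure QRep (n l : ℕ) where
  Xm : ZMod l → Matrix (Fin n) (Fin n) ℂ
  Ym : ZMod l → Matrix (Fin n) (Fin n) ℂ
  v : Fin n → ℂ
  w : Fin n → ℂ

/-- The relation `→`: `(i,m) → (j,m−1)` iff `X^{(m−1)}_{ij} ≠ 0`, and
`(i,m) → (j,m+1)` iff `Y^{(m)}_{ij} ≠ 0`. -/
def step {n l : ℕ} (x : QRep n l) (p q : Fin n × ZMod l) : Prop :=
  (q.2 = p.2 - 1 ∧ x.Xm (p.2 - 1) p.1 q.1 ≠ 0) ∨ (q.2 = p.2 + 1 ∧ x.Ym p.2 p.1 q.1 ≠ 0)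

/-- `lim_{t→0} λ(t)·x` exists: every nonzero coordinate of `x` has nonnegative
`λ`-weight, for `λ = (a_k^{(m)})` in the maximal torus. -/
def limitExists {n l : ℕ} (x : QRep n l) (a : Fin n → ZMod l → ℤ) : Prop :=
  (∀ m i j, x.Xm m i j ≠ 0 → 0 ≤ a i (m + 1) - a j m) ∧
  (∀ m i j, x.Ym m i j ≠ 0 → 0 ≤ a i m - a j (m + 1)) ∧
  (∀ i, x.v i ≠ 0 → 0 ≤ a i 0) ∧
  (∀ i, x.w i ≠ 0 → 0 ≤ -(a i 0))

/-- The candidate optimal `λ_x`: entry `(k,m)` is `0` iff `(k,m) ∈ Λ_x`, the set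
generated from `{(i,0) : wᵢ ≠ 0}` under the reachability relation `⇝`. -/
noncomputable def lamOf {n l : ℕ} (x : QRep n l) : Fin n → ZMod l → ℤ :=
  fun k m =>
    if ∃ i, x.w i ≠ 0 ∧ Relation.ReflTransGen (step x) (i, 0) (k, m) then 0 else 1

/-- If `λ` has entries in `{0,1}`, `a_i^{(0)} = 1` for all `i`, `λ` is not the all-ones
vector, and `λ` destabilises `x` for `θ = (−1,…,−1)`, then `w = 0`, hence `λ_x` is the
all-ones vector, so `λ ≠ λ_x`. -/
theorem stmt13 (n l : ℕ) [NeZero l] (x : QRep n l) (a : Fin n → ZMod l → ℤ)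
    (h01 : ∀ k m, a k m = 0 ∨ a k m = 1)
    (hzero : ∀ i, a i 0 = 1)
    (hnotall : ¬ ∀ k m, a k m = 1)
    (hlim : limitExists x a)
    (hmu : 0 < ∑ k : Fin n, ∑ m : ZMod l, a k m) :
    x.w = 0 ∧ (∀ k m, lamOf x k m = 1) ∧ a ≠ lamOf x := by
  have hw : x.w = 0 := by
    funext i
    by_contra hi
    have := hlim.2.2.2 i hi
    rw [hzero i] at this
    omega
  have hlam : ∀ k m, lamOf x k m = 1 := by
    intro k m
    unfold lamOf
    rw [if_neg]
    rintro ⟨i, hi, -⟩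
    exact hi (by rw [hw]; rfl)
  refine ⟨hw, hlam, ?_⟩
  intro h
  exact hnotall (fun k m => by rw [h]; exact hlam k m)
end
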